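/- Gautschi-type inequality: for all x > 0, sqrt(x + 1/4) ≤ Γ(x+1)/Γ(x+1/2) ≤ sqrt(x + (√3 − 1)/2). -/
import Mathlib

open Filter Finset Topology

private lemma gautschi_telescope (a : ℝ) (ha : 0 < a) (n : ℕ) :
    ∏ j ∈ Finset.range (n + 1), (a + j) / (a + j + 1) = a / (a + n + 1) := by
  induction n with
  | zero => simp
  | succ n ih =>
      rw [Finset.prod_range_succ, ih]
      have h1 : a + n + 1 ≠ 0 := by positivity
      have h2 : a + (n + 1 : ℕ) + 1 ≠ 0 := by positivity
      push_cast
      field_simp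
      ring

/-- Gautschi-type inequality:
√(x + 1/4) ≤ Γ(x+1)/Γ(x+1/2) ≤ √(x + (√3 − 1)/2) for x > 0. -/
theorem gautschi_inequality (x : ℝ) (hx : 0 < x) :
    Real.sqrt (x + 1 / 4) ≤ Real.Gamma (x + 1) / Real.Gamma (x + 1 / 2) ∧
      Real.Gamma (x + 1) / Real.Gamma (x + 1 / 2) ≤
        Real.sqrt (x + (Real.sqrt 3 - 1) / 2) := by
  set c : ℝ := (Real.sqrt 3 - 1) / 2 with hc_def
  have hs3 : Real.sqrt 3 ^ 2 = 3 := Real.sq_sqrt (by norm_num)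
  have hs3n : 0 ≤ Real.sqrt 3 := Real.sqrt_nonneg 3
  have hc13 : (1:ℝ)/3 ≤ c := by
    rw [hc_def]; nlinarith [hs3, hs3n]
  have hcpos : 0 < c := lt_of_lt_of_le (by norm_num) hc13
  set G : ℝ := Real.Gamma (x + 1) / Real.Gamma (x + 1 / 2) with hG_def
  have hΓ1 : 0 < Real.Gamma (x + 1) := Real.Gamma_pos_of_pos (by linarith)
  have hΓ2 : 0 < Real.Gamma (x + 1 / 2) := Real.Gamma_pos_of_pos (by linarith)
  have hGpos : 0 < G := div_pos hΓ1 hΓ2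
  -- the squared product
  set Q : ℕ → ℝ := fun n => ∏ j ∈ Finset.range (n + 1),
      (x + 1 / 2 + j) ^ 2 / (x + 1 + j) ^ 2 with hQ_def
  -- lower bound on Q
  have hQlow : ∀ n : ℕ, (x + 1/4) / (x + 1/4 + n + 1) ≤ Q n := by
    intro n
    rw [← gautschi_telescope (x + 1/4) (by linarith) n, hQ_def]
    apply Finset.prod_le_prod
    · intro j _
      have : (0:ℝ) < x + 1/4 + j + 1 := by positivity
      positivity
    · intro j _
      have hj : (0:ℝ) ≤ (j:ℝ) := j.cast_nonneg
      rw [div_le_div_iff₀ (by positivity) (by positivity)]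
      nlinarith [hj, hx]
  -- upper bound on Q
  have hQhigh : ∀ n : ℕ, Q n ≤ (x + c) / (x + c + n + 1) := by
    intro n
    rw [← gautschi_telescope (x + c) (by linarith) n, hQ_def]
    apply Finset.prod_le_prod
    · intro j _
      positivity
    · intro j _
      have hj : (0:ℝ) ≤ (j:ℝ) := j.cast_nonneg
      rw [div_le_div_iff₀ (by positivity) (by positivity)]
      nlinarith [hj, hx, hc13]
  -- the GammaSeq ratio
  set R : ℕ → ℝ := fun n => Real.GammaSeq (x + 1) n / Real.GammaSeq (x + 1/2) n with hR_def
  have hRsq : ∀ n : ℕ, 1 ≤ n → (R n) ^ 2 = n * Q n := by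
    intro n hn
    have hnpos : (0:ℝ) < n := by exact_mod_cast hn
    have hfact : (0:ℝ) < (n.factorial : ℝ) := by exact_mod_cast n.factorial_pos
    have hA : (0:ℝ) < ∏ j ∈ Finset.range (n + 1), (x + 1 + j) := by
      apply Finset.prod_pos; intro j _; positivity
    have hB : (0:ℝ) < ∏ j ∈ Finset.range (n + 1), (x + 1/2 + j) := by
      apply Finset.prod_pos; intro j _; positivity
    have hrpow1 : (0:ℝ) < (n:ℝ) ^ (x + 1) := Real.rpow_pos_of_pos hnpos _
    have hrpow2 : (0:ℝ) < (n:ℝ) ^ (x + 1/2) := Real.rpow_pos_of_pos hnpos _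
    have key : R n = (n:ℝ) ^ ((1:ℝ)/2) *
        ∏ j ∈ Finset.range (n + 1), ((x + 1/2 + j) / (x + 1 + j)) := by
      rw [hR_def]
      simp only [Real.GammaSeq]
      rw [Finset.prod_div_distrib]
      have hdiff : (n:ℝ) ^ ((1:ℝ)/2) = (n:ℝ) ^ (x + 1) / (n:ℝ) ^ (x + 1/2) := by
        rw [← Real.rpow_sub hnpos]; norm_num
      rw [hdiff]
      field_simp
    rw [key, mul_pow]
    have h1 : ((n:ℝ) ^ ((1:ℝ)/2)) ^ 2 = (n:ℝ) := by
      rw [← Real.rpow_natCast ((n:ℝ) ^ ((1:ℝ)/2)) 2, ← Real.rpow_mul hnpos.le]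
      norm_num
    rw [h1, hQ_def]
    congr 1
    rw [← Finset.prod_pow]
    apply Finset.prod_congr rfl
    intro j _
    rw [div_pow]
  -- limit of R^2 is G^2
  have hΓ2ne : Real.Gamma (x + 1/2) ≠ 0 := ne_of_gt hΓ2
  have hRtend : Tendsto R atTop (𝓝 G) := by
    exact (Real.GammaSeq_tendsto_Gamma (x + 1)).div
      (Real.GammaSeq_tendsto_Gamma (x + 1/2)) hΓ2ne
  have hR2tend : Tendsto (fun n => (R n) ^ 2) atTop (𝓝 (G ^ 2)) := hRtend.pow 2
  -- upper bound on G^2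
  have hG2high : G ^ 2 ≤ x + c := by
    apply le_of_tendsto hR2tend
    filter_upwards [eventually_ge_atTop 1] with n hn
    rw [hRsq n hn]
    have h1 : (n:ℝ) * Q n ≤ (n:ℝ) * ((x + c) / (x + c + n + 1)) := by
      apply mul_le_mul_of_nonneg_left (hQhigh n) (by positivity)
    refine h1.trans ?_
    rw [mul_div_assoc', div_le_iff₀ (by positivity)]
    nlinarith [Nat.cast_nonneg (α := ℝ) n, hcpos, hx]
  -- lower bound on G^2
  have hlimlow : Tendsto (fun n : ℕ => (n:ℝ) * ((x + 1/4) / (x + 1/4 + n + 1)))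
      atTop (𝓝 (x + 1/4)) := by
    have h0 : Tendsto (fun n : ℕ => (x + 1/4 + n + 1)) atTop atTop := by
      apply tendsto_atTop_add_const_right
      apply tendsto_atTop_add_const_left
      exact tendsto_natCast_atTop_atTop
    have h1 : Tendsto (fun n : ℕ => (x + 1/4 + n + 1)⁻¹) atTop (𝓝 0) :=
      h0.inv_tendsto_atTop
    have h2 : Tendsto (fun n : ℕ => (x + 1/4) - (x + 1/4) * (x + 1/4 + 1) * (x + 1/4 + n + 1)⁻¹)
        atTop (𝓝 ((x + 1/4) - (x + 1/4) * (x + 1/4 + 1) * 0)) :=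
      tendsto_const_nhds.sub (tendsto_const_nhds.mul h1)
    rw [mul_zero, sub_zero] at h2
    apply h2.congr
    intro n
    have hd : (x + 1/4 + n + 1) ≠ 0 := by positivity
    field_simp
    ring
  have hG2low : x + 1/4 ≤ G ^ 2 := by
    apply le_of_tendsto_of_tendsto' hlimlow hR2tend
    intro n
    rcases Nat.eq_zero_or_pos n with h0 | h1
    · subst h0; simp
      positivity
    · rw [hRsq n h1]
      exact mul_le_mul_of_nonneg_left (hQlow n) (by positivity)
  constructor
  · have := Real.sqrt_le_sqrt hG2low
    rwa [Real.sqrt_sq hGpos.le] at this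
  · have := Real.sqrt_le_sqrt hG2high
    rwa [Real.sqrt_sq hGpos.le] at this
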